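/- arXiv:1506.07645 — 4 statements merged into one kernel-verified Lean document; each statement's English description precedes it below -/
import Mathlib

section
/- For every odd integer N_p0 with 1 ≤ N_p0 ≤ 3^{m-1}, there exists a valid pilot assignment vector p ∈ P_L with N_pil(p) = N_p0; conversely, every p ∈ P_L has odd pilot length N_pil(p) with 1 ≤ N_pil(p) ≤ 3^{m-1}. In other words, {N_pil(p) : p ∈ P_L} = {1, 3, 5, …, 3^{m-1}} (Lemma 1). -/
/-!
Clearing denominators, `p` is valid iff `Σ p_i 3^(m-1-i) = 3^(m-1)`. Since `3 ≡ 1 (mod 2)` and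
`p_i ≥ 0`, the pilot length `Σ p_i` has the parity of `3^(m-1)` and is at most `3^(m-1)`.
Conversely, an odd `N` with `3^j ≤ N ≤ 3^(j+1)` is the length of the vector supported on levels
`j` and `j + 1` with entries `a`, `c` solving `a + c = N`, `3a + c = 3^(j+1)`.
-/

/-- A pilot assignment vector `p = (p_0, …, p_{m-1})` is valid if `0 ≤ p_i ≤ 3^i`
for every `i` and `Σ_i p_i · 3^{-i} = 1`. -/
def validP {m : ℕ} (p : Fin m → ℤ) : Prop :=
  (∀ i, 0 ≤ p i ∧ p i ≤ 3 ^ (i : ℕ)) ∧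
  (∑ i, (p i : ℝ) / 3 ^ (i : ℕ)) = 1

/-- The pilot length `N_pil(p) = Σ_i p_i`. -/
def Npil {m : ℕ} (p : Fin m → ℤ) : ℤ := ∑ i, p i

lemma exists_pow_le_le_pow_succ (b n : ℤ) (hn : 1 ≤ n) :
    ∀ M : ℕ, n ≤ b ^ (M + 1) → ∃ j ≤ M, b ^ j ≤ n ∧ n ≤ b ^ (j + 1)
  | 0, h => ⟨0, le_rfl, by simpa using hn, h⟩
  | M + 1, h => by
    by_cases hM : n ≤ b ^ (M + 1)
    · obtain ⟨j, hj, hbj⟩ := exists_pow_le_le_pow_succ b n hn M hM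
      exact ⟨j, by omega, hbj⟩
    · exact ⟨M + 1, le_rfl, by linarith, h⟩

lemma sum_div_three_pow_eq_one_iff {m : ℕ} (p : Fin m → ℤ) :
    (∑ i, (p i : ℝ) / 3 ^ (i : ℕ)) = 1 ↔ ∑ i, p i * 3 ^ (m - 1 - i) = 3 ^ (m - 1) := by
  have hscale : (∑ i, (p i : ℝ) / 3 ^ (i : ℕ)) * 3 ^ (m - 1) =
      ((∑ i, p i * 3 ^ (m - 1 - i) : ℤ) : ℝ) := by
    push_cast
    rw [Finset.sum_mul]
    refine Finset.sum_congr rfl fun i _ => ?_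
    rw [pow_sub₀ (3 : ℝ) three_ne_zero (show (i : ℕ) ≤ m - 1 by omega)]
    ring
  have h3 : (3 : ℝ) ^ (m - 1) ≠ 0 := by positivity
  rw [← (mul_left_injective₀ h3).eq_iff, hscale, one_mul]
  norm_cast

lemma sum_mul_three_pow_modEq_two {ι : Type*} (s : Finset ι) (p : ι → ℤ) (e : ι → ℕ) :
    ∑ i ∈ s, p i * 3 ^ e i ≡ ∑ i ∈ s, p i [ZMOD 2] := by
  have h31 : (3 : ℤ) ≡ 1 [ZMOD 2] := by decide
  calc ∑ i ∈ s, p i * 3 ^ e i ≡ ∑ i ∈ s, p i * 1 ^ e i [ZMOD 2] :=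
        Int.ModEq.sum fun i _ => (h31.pow _).mul_left _
    _ = ∑ i ∈ s, p i := by simp

namespace validP

variable {m : ℕ} {p : Fin m → ℤ}

lemma sum_mul_three_pow (hp : validP p) : ∑ i, p i * 3 ^ (m - 1 - i) = 3 ^ (m - 1) :=
  (sum_div_three_pow_eq_one_iff p).mp hp.2

lemma npil_le (hp : validP p) : Npil p ≤ 3 ^ (m - 1) :=
  hp.sum_mul_three_pow ▸ Finset.sum_le_sum fun i _ =>
    le_mul_of_one_le_right (hp.1 i).1 (one_le_pow₀ (by norm_num))

lemma odd_npil (hp : validP p) : Odd (Npil p) := by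
  have hmod := hp.sum_mul_three_pow ▸ sum_mul_three_pow_modEq_two Finset.univ p (m - 1 - ·)
  have h3 : Odd ((3 : ℤ) ^ (m - 1)) := Odd.pow (by decide)
  rw [Int.odd_iff] at h3 ⊢
  exact hmod.eq.symm.trans h3

lemma one_le_npil (hp : validP p) : 1 ≤ Npil p := by
  obtain ⟨t, ht⟩ := hp.odd_npil
  have : 0 ≤ Npil p := Finset.sum_nonneg fun i _ => (hp.1 i).1
  omega

end validP

lemma validP_single_add_single {m : ℕ} (j : ℕ) (hj : j + 1 < m) {a c : ℤ}
    (ha : 0 ≤ a ∧ a ≤ 3 ^ j) (hc : 0 ≤ c ∧ c ≤ 3 ^ (j + 1))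
    (h : 3 * a + c = 3 ^ (j + 1)) :
    validP (Pi.single (⟨j, by omega⟩ : Fin m) a + Pi.single ⟨j + 1, hj⟩ c) := by
  refine ⟨fun i => ?_, (sum_div_three_pow_eq_one_iff _).mpr ?_⟩
  · simp only [Pi.add_apply, Pi.single_apply, Fin.ext_iff]
    split_ifs <;> simp_all
  · simp only [Pi.add_apply, add_mul, Finset.sum_add_distrib, Pi.single_apply, ite_mul, zero_mul,
      Finset.sum_ite_eq', Finset.mem_univ, if_true]
    obtain ⟨k, hk⟩ : ∃ k, m - 1 = j + 1 + k := ⟨m - 1 - (j + 1), by omega⟩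
    rw [hk, show j + 1 + k - j = k + 1 by omega, Nat.add_sub_cancel_left, pow_add _ (j + 1),
      ← h]
    ring

lemma exists_validP_npil_eq {m : ℕ} (hm : 2 ≤ m) {N : ℤ} (hN : Odd N) (h1 : 1 ≤ N)
    (h2 : N ≤ 3 ^ (m - 1)) : ∃ p : Fin m → ℤ, validP p ∧ Npil p = N := by
  obtain ⟨j, hj, hlo, hhi⟩ :=
    exists_pow_le_le_pow_succ 3 N h1 (m - 2) (by rwa [show m - 2 + 1 = m - 1 by omega])
  obtain ⟨t, rfl⟩ := hN
  obtain ⟨s, hs⟩ : Odd ((3 : ℤ) ^ (j + 1)) := Odd.pow (by decide)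
  have h3 : (3 : ℤ) ^ (j + 1) = 3 ^ j * 3 := pow_succ 3 j
  -- as `N = 2t + 1` and `3^(j+1) = 2s + 1`: `a = (3^(j+1) - N) / 2`, `c = (3N - 3^(j+1)) / 2`
  refine ⟨_, validP_single_add_single j (by omega : j + 1 < m) (a := s - t) (c := 3 * t - s + 1)
    ⟨by omega, by omega⟩ ⟨by omega, by omega⟩ (by omega), ?_⟩
  simp only [Npil, Pi.add_apply, Finset.sum_add_distrib, Finset.sum_pi_single', Finset.mem_univ,
    if_true]
  ring

/-- Lemma 1: the set of achievable pilot lengths of valid pilot assignment vectors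
is exactly the set of odd integers between `1` and `3^{m-1}`. -/
theorem pilot_length_range (m : ℕ) (hm : 2 ≤ m) :
    {N : ℤ | ∃ p : Fin m → ℤ, validP p ∧ Npil p = N} =
    {N : ℤ | Odd N ∧ 1 ≤ N ∧ N ≤ 3 ^ (m - 1)} := by
  ext N
  constructor
  · rintro ⟨p, hp, rfl⟩
    exact ⟨hp.odd_npil, hp.one_le_npil, hp.npil_le⟩
  · rintro ⟨hodd, h1, h2⟩
    exact exists_validP_npil_eq hm hodd h1 h2
end

section
/- Let N_p0 be an odd integer with 1 ≤ N_p0 ≤ 3^{m-1} and let p ∈ Ω(N_p0). Then the transition vector t = (t_0, …, t_{m-2}) of p satisfies 0 ≤ t_i ≤ 3^i for every 0 ≤ i ≤ m-2, and Σ_{i=0}^{m-2} t_i = (N_p0 − 1)/2 (Lemma 2). -/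
/-- Auxiliary recursion: `t_0 = 1 - q 0`, `t_{i+1} = 3·t_i - q (i+1)`. -/
def transAux (q : ℕ → ℤ) : ℕ → ℤ
  | 0 => 1 - q 0
  | i + 1 => 3 * transAux q i - q (i + 1)

/-- The transition vector of a pilot assignment vector:
`t_0 = 1 - p_0`, `t_i = 3·t_{i-1} - p_i`. -/
def transVec {m : ℕ} (p : Fin m → ℤ) (i : ℕ) : ℤ :=
  transAux (fun j => if h : j < m then p ⟨j, h⟩ else 0) i

/-- Lemma 2: for any valid pilot assignment vector of pilot length `N_p0`
(`N_p0` odd, `1 ≤ N_p0 ≤ 3^{m-1}`), the transition vector satisfies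
`0 ≤ t_i ≤ 3^i` for `0 ≤ i ≤ m-2` and `Σ_{i=0}^{m-2} t_i = (N_p0 - 1)/2`. -/
theorem transition_vector_constraints (m : ℕ) (hm : 2 ≤ m)
    (Np0 : ℤ) (hodd : Odd Np0) (h1 : 1 ≤ Np0) (h2 : Np0 ≤ 3 ^ (m - 1))
    (p : Fin m → ℤ) (hp : validP p) (hlen : Npil p = Np0) :
    (∀ i ≤ m - 2, 0 ≤ transVec p i ∧ transVec p i ≤ 3 ^ i) ∧
    ∑ i ∈ Finset.range (m - 1), transVec p i = (Np0 - 1) / 2 := by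
  set q : ℕ → ℤ := fun j => if h : j < m then p ⟨j, h⟩ else 0 with hqdef
  set q : ℕ → ℤ := fun j => if h : j < m then p ⟨j, h⟩ else 0 with hqdef
  have htv : ∀ i, transVec p i = transAux q i := fun i => rfl
  have hqnn : ∀ j, 0 ≤ q j := by
    intro j; simp only [hqdef]; split
    · exact (hp.1 _).1
    · exact le_refl 0
  have hqv : ∀ i : Fin m, q (i : ℕ) = p i := by
    intro i; simp only [hqdef, dif_pos i.isLt]
  -- the key integer identity
  have hreal : ∑ j ∈ Finset.range m, ((q j : ℝ) * 3 ^ (m - 1 - j)) = 3 ^ (m - 1) := by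
    rw [← Fin.sum_univ_eq_sum_range (fun j => (q j : ℝ) * 3 ^ (m - 1 - j)) m]
    have h := hp.2
    have hmul : ∑ i : Fin m, ((p i : ℝ) / 3 ^ (i : ℕ)) * 3 ^ (m - 1) = 3 ^ (m - 1) := by
      rw [← Finset.sum_mul, h, one_mul]
    rw [← hmul]
    refine Finset.sum_congr rfl fun i _ => ?_
    have h3 : (3 : ℝ) ^ (m - 1) = 3 ^ (i : ℕ) * 3 ^ (m - 1 - (i : ℕ)) := by
      rw [← pow_add]; congr 1; omega
    have hb : (3 : ℝ) ^ (i : ℕ) ≠ 0 := by positivity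
    rw [hqv i, h3]
    field_simp
  have hkey : ∑ j ∈ Finset.range m, q j * 3 ^ (m - 1 - j) = 3 ^ (m - 1) := by
    exact_mod_cast hreal
  -- closed form
  have hid : ∀ i < m, transAux q i * 3 ^ (m - 1 - i)
      = 3 ^ (m - 1) - ∑ j ∈ Finset.range (i + 1), q j * 3 ^ (m - 1 - j) := by
    intro i hi
    induction i with
    | zero => simp [transAux]; ring
    | succ n ih =>
      have hn : n < m := by omega
      have hrec : transAux q (n + 1) = 3 * transAux q n - q (n + 1) := rfl
      have h3 : (3 : ℤ) * 3 ^ (m - 1 - (n + 1)) = 3 ^ (m - 1 - n) := by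
        rw [← pow_succ']; congr 1; omega
      rw [Finset.sum_range_succ, hrec]
      linear_combination ih hn + transAux q n * h3
  -- nonnegativity
  have hnn : ∀ i < m, 0 ≤ transAux q i := by
    intro i hi
    have h1' : transAux q i * 3 ^ (m - 1 - i)
        = ∑ j ∈ Finset.Ico (i + 1) m, q j * 3 ^ (m - 1 - j) := by
      rw [hid i hi, Finset.sum_Ico_eq_sub _ (by omega : i + 1 ≤ m), hkey]
    have h2' : 0 ≤ ∑ j ∈ Finset.Ico (i + 1) m, q j * 3 ^ (m - 1 - j) :=
      Finset.sum_nonneg fun j _ => mul_nonneg (hqnn j) (by positivity)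
    nlinarith [pow_pos (by norm_num : (0:ℤ) < 3) (m - 1 - i), h1', h2']
  -- upper bound
  have hub : ∀ i, transAux q i ≤ 3 ^ i := by
    intro i
    induction i with
    | zero => simpa [transAux] using hqnn 0
    | succ n ih =>
      have : transAux q (n + 1) = 3 * transAux q n - q (n + 1) := rfl
      rw [this, pow_succ]
      have := hqnn (n + 1)
      nlinarith
  -- t_{m-1} = 0
  have htm : transAux q (m - 1) = 0 := by
    have h := hid (m - 1) (by omega)
    rw [show m - 1 - (m - 1) = 0 from by omega, show m - 1 + 1 = m from by omega,
      hkey, pow_zero, mul_one] at h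
    omega
  -- total pilot length
  have hsumq : ∑ j ∈ Finset.range m, q j = Np0 := by
    rw [← Fin.sum_univ_eq_sum_range]
    rw [← hlen]; unfold Npil
    exact Finset.sum_congr rfl fun i _ => hqv i
  -- telescoping sum
  set S := ∑ i ∈ Finset.range (m - 1), transAux q i with hS
  have htel : ∑ i ∈ Finset.range (m - 1), transAux q (i + 1)
      = 3 * S - ∑ i ∈ Finset.range (m - 1), q (i + 1) := by
    rw [hS, Finset.mul_sum, ← Finset.sum_sub_distrib]
    exact Finset.sum_congr rfl fun i _ => rfl
  have hA : ∑ i ∈ Finset.range m, transAux q i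
      = ∑ i ∈ Finset.range (m - 1), transAux q (i + 1) + transAux q 0 := by
    rw [show m = (m - 1) + 1 from by omega, Finset.sum_range_succ']
    simp
  have hB : ∑ i ∈ Finset.range m, transAux q i = S + transAux q (m - 1) := by
    rw [hS, show m = (m - 1) + 1 from by omega, Finset.sum_range_succ]
    simp
  have hC : ∑ j ∈ Finset.range m, q j = ∑ i ∈ Finset.range (m - 1), q (i + 1) + q 0 := by
    rw [show m = (m - 1) + 1 from by omega, Finset.sum_range_succ']
    simp
  have ht0 : transAux q 0 = 1 - q 0 := rfl
  have h2S : 2 * S = Np0 - 1 := by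
    have := hA
    rw [hB, htel, ht0] at this
    have hq0 : ∑ i ∈ Finset.range (m - 1), q (i + 1) = Np0 - q 0 := by
      omega
    rw [hq0, htm] at this
    omega
  constructor
  · intro i hi
    rw [htv]
    exact ⟨hnn i (by omega), hub i⟩
  · have : ∑ i ∈ Finset.range (m - 1), transVec p i = S := by
      exact Finset.sum_congr rfl fun i _ => htv i
    rw [this]
    omega
end

section
/- Let C_0, …, C_{m-1} be arbitrary real numbers. For every p ∈ P_L with transition vector t, the per-cell sum rate satisfies the identity C_sum(p) = C_0 + Σ_{i=0}^{m-2} t_i·3^{-i}·(C_{i+1} − C_i); in particular, if C_i = C_0 + i·d for a constant d, then C_sum(p) = C_0 + d·Σ_{i=0}^{m-2} t_i·3^{-i}. -/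
/-- The per-cell sum rate `C_sum(p) = Σ_i 3^{-i}·p_i·C_i`. -/
noncomputable def Csum {m : ℕ} (C : ℕ → ℝ) (p : Fin m → ℤ) : ℝ :=
  ∑ i, (p i : ℝ) / 3 ^ (i : ℕ) * C (i : ℕ)

/-! Abel summation turns `Σ wᵢ Cᵢ` into `C₀` plus the increments `C_{i+1} - C_i` weighted by
the tail sums `1 - Σ_{j ≤ i} wⱼ` of the weights, which add up to `1`. For `wᵢ = pᵢ 3^{-i}` the
recursion of the transition vector unrolls to `tᵢ = 3^i (1 - Σ_{j ≤ i} pⱼ 3^{-j})`, so these tail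
sums are exactly `tᵢ 3^{-i}`. -/

open Finset

theorem Finset.sum_range_mul_eq_add_sum_mul_sub_of_sum_eq_one {R : Type*} [CommRing R]
    (w C : ℕ → R) {n : ℕ} (hw : ∑ i ∈ range n, w i = 1) :
    ∑ i ∈ range n, w i * C i =
      C 0 + ∑ i ∈ range (n - 1), (1 - ∑ j ∈ range (i + 1), w j) * (C (i + 1) - C i) := by
  have hby_parts := sum_range_by_parts C w n
  simp only [smul_eq_mul, hw, mul_one] at hby_parts
  have htelescope := sum_range_sub C (n - 1)
  simp only [sub_mul, one_mul, sum_sub_distrib, mul_comm (w _), hby_parts,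
    mul_comm (∑ j ∈ range _, w j)] at htelescope ⊢
  linear_combination -htelescope

theorem transAux_div_pow (q : ℕ → ℤ) (i : ℕ) :
    (transAux q i : ℝ) / 3 ^ i = 1 - ∑ j ∈ range (i + 1), (q j : ℝ) / 3 ^ j := by
  induction i with
  | zero => simp [transAux]
  | succ i ih =>
    rw [sum_range_succ, ← sub_sub, ← ih, transAux]
    push_cast
    field_simp
    ring

/-- `transVec p` is by definition `transAux (padZero p)`. -/
def padZero {m : ℕ} (p : Fin m → ℤ) (j : ℕ) : ℤ :=
  if h : j < m then p ⟨j, h⟩ else 0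

@[simp]
theorem padZero_val {m : ℕ} (p : Fin m → ℤ) (i : Fin m) : padZero p i = p i := by
  simp [padZero]

theorem sum_fin_eq_sum_range_padZero {m : ℕ} (p : Fin m → ℤ) (F : ℕ → ℤ → ℝ) :
    ∑ i : Fin m, F i (p i) = ∑ i ∈ range m, F i (padZero p i) := by
  simp only [← Fin.sum_univ_eq_sum_range (fun i => F i (padZero p i)), padZero_val]

theorem Csum_eq_sum_range {m : ℕ} (C : ℕ → ℝ) (p : Fin m → ℤ) :
    Csum C p = ∑ i ∈ range m, (padZero p i : ℝ) / 3 ^ i * C i :=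
  sum_fin_eq_sum_range_padZero p fun i x => (x : ℝ) / 3 ^ i * C i

theorem validP.sum_range_padZero {m : ℕ} {p : Fin m → ℤ} (hp : validP p) :
    ∑ i ∈ range m, (padZero p i : ℝ) / 3 ^ i = 1 := by
  rw [← sum_fin_eq_sum_range_padZero p fun i x => (x : ℝ) / 3 ^ i]
  exact hp.2

theorem transVec_div_pow {m : ℕ} (p : Fin m → ℤ) (i : ℕ) :
    (transVec p i : ℝ) / 3 ^ i = 1 - ∑ j ∈ range (i + 1), (padZero p j : ℝ) / 3 ^ j :=
  transAux_div_pow (padZero p) i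

theorem sum_rate_via_transition_general (m : ℕ) (C : ℕ → ℝ)
    (p : Fin m → ℤ) (hp : validP p) :
    Csum C p =
      C 0 + ∑ i ∈ Finset.range (m - 1), (transVec p i : ℝ) / 3 ^ i * (C (i + 1) - C i) ∧
    ∀ d : ℝ, (∀ i < m, C i = C 0 + i * d) →
      Csum C p = C 0 + d * ∑ i ∈ Finset.range (m - 1), (transVec p i : ℝ) / 3 ^ i := by
  have hsum : Csum C p =
      C 0 + ∑ i ∈ range (m - 1), (transVec p i : ℝ) / 3 ^ i * (C (i + 1) - C i) := by
    simp only [Csum_eq_sum_range, transVec_div_pow]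
    exact sum_range_mul_eq_add_sum_mul_sub_of_sum_eq_one _ C hp.sum_range_padZero
  refine ⟨hsum, fun d hd => ?_⟩
  rw [hsum, mul_sum]
  congr 1
  refine sum_congr rfl fun i hi => ?_
  have hsucc : i + 1 < m := by rw [mem_range] at hi; omega
  rw [hd (i + 1) hsucc, hd i (by omega)]
  push_cast
  ring

/-- For any reals `C_0, …, C_{m-1}` and any valid pilot assignment vector `p`
with transition vector `t`:
`C_sum(p) = C_0 + Σ_{i=0}^{m-2} t_i·3^{-i}·(C_{i+1} - C_i)`; in particular if
`C_i = C_0 + i·d` then `C_sum(p) = C_0 + d·Σ_{i=0}^{m-2} t_i·3^{-i}`. -/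
theorem sum_rate_via_transition (m : ℕ) (hm : 2 ≤ m) (C : ℕ → ℝ)
    (p : Fin m → ℤ) (hp : validP p) :
    Csum C p =
      C 0 + ∑ i ∈ Finset.range (m - 1), (transVec p i : ℝ) / 3 ^ i * (C (i + 1) - C i) ∧
    ∀ d : ℝ, (∀ i < m, C i = C 0 + i * d) →
      Csum C p = C 0 + d * ∑ i ∈ Finset.range (m - 1), (transVec p i : ℝ) / 3 ^ i :=
  sum_rate_via_transition_general m C p hp
end

section
/- Let m ≥ 2 and let S be an integer with 0 ≤ S ≤ Σ_{i=0}^{m-2} 3^i, and set χ = min{k ∈ ℕ : Σ_{i=0}^{k} 3^i > S}. Among all integer vectors t = (t_0, …, t_{m-2}) satisfying 0 ≤ t_i ≤ 3^i for all i and Σ_{i=0}^{m-2} t_i = S, the quantity Σ_{i=0}^{m-2} t_i·3^{-i} is maximized by the greedy vector t' given by t'_i = 3^i for i < χ, t'_χ = S − Σ_{i=0}^{χ-1} 3^i, and t'_i = 0 for i > χ; moreover the maximum value equals χ + (S − (3^χ − 1)/2)·3^{-χ}. -/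
/-- `χ = min{k ∈ ℕ : Σ_{i=0}^{k} 3^i > S}`. -/
noncomputable def chiS (S : ℤ) : ℕ := sInf {k : ℕ | S < ∑ i ∈ Finset.range (k + 1), (3 : ℤ) ^ i}

/-- The greedy vector: `t'_i = 3^i` for `i < χ`, `t'_χ = S - Σ_{i<χ} 3^i`,
and `t'_i = 0` for `i > χ`. -/
noncomputable def greedyT (S : ℤ) : ℕ → ℤ := fun i =>
  if i < chiS S then 3 ^ i
  else if i = chiS S then S - ∑ s ∈ Finset.range (chiS S), 3 ^ s
  else 0

lemma chiS_mem (S : ℤ) (hS0 : 0 ≤ S) :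
    S < ∑ i ∈ Finset.range (chiS S + 1), (3 : ℤ) ^ i := by
  have hne : {k : ℕ | S < ∑ i ∈ Finset.range (k + 1), (3 : ℤ) ^ i}.Nonempty := by
    refine ⟨S.toNat, ?_⟩
    have h1 : (S.toNat + 1 : ℤ) ≤ ∑ i ∈ Finset.range (S.toNat + 1), (3 : ℤ) ^ i := by
      calc (S.toNat + 1 : ℤ) = ∑ _i ∈ Finset.range (S.toNat + 1), (1 : ℤ) := by simp
        _ ≤ _ := Finset.sum_le_sum fun i _ => one_le_pow₀ (by norm_num)
    have : S < (S.toNat + 1 : ℤ) := by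
      have := Int.self_le_toNat S; omega
    exact lt_of_lt_of_le this h1
  exact Nat.sInf_mem hne

lemma chiS_ge (S : ℤ) (hS0 : 0 ≤ S) :
    ∑ i ∈ Finset.range (chiS S), (3 : ℤ) ^ i ≤ S := by
  rcases Nat.eq_zero_or_pos (chiS S) with h | h
  · simp [h, hS0]
  · obtain ⟨c, hc⟩ : ∃ c, chiS S = c + 1 := ⟨chiS S - 1, by omega⟩
    have hclt : c < chiS S := by rw [hc]; omega
    have hnot : c ∉ {k : ℕ | S < ∑ i ∈ Finset.range (k + 1), (3 : ℤ) ^ i} :=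
      Nat.notMem_of_lt_sInf hclt
    simp only [Set.mem_setOf_eq, not_lt] at hnot
    rw [hc]
    exact hnot

lemma greedy_partial (S : ℤ) (hS0 : 0 ≤ S) (k : ℕ) :
    ∑ i ∈ Finset.range k, greedyT S i = min S (∑ i ∈ Finset.range k, (3 : ℤ) ^ i) := by
  rcases le_or_gt k (chiS S) with hk | hk
  · have h1 : ∑ i ∈ Finset.range k, greedyT S i = ∑ i ∈ Finset.range k, (3 : ℤ) ^ i := by
      refine Finset.sum_congr rfl fun i hi => ?_
      have : i < chiS S := lt_of_lt_of_le (Finset.mem_range.mp hi) hk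
      simp [greedyT, this]
    rw [h1, min_eq_right]
    calc ∑ i ∈ Finset.range k, (3 : ℤ) ^ i ≤ ∑ i ∈ Finset.range (chiS S), (3 : ℤ) ^ i :=
          Finset.sum_le_sum_of_subset_of_nonneg (Finset.range_subset_range.mpr hk)
            (fun i _ _ => by positivity)
      _ ≤ S := chiS_ge S hS0
  · have h1 : ∑ i ∈ Finset.range k, greedyT S i = S := by
      rw [Finset.range_eq_Ico, ← Finset.sum_Ico_consecutive _ (Nat.zero_le (chiS S + 1)) hk]
      have h2 : ∑ i ∈ Finset.Ico (chiS S + 1) k, greedyT S i = 0 := by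
        refine Finset.sum_eq_zero fun i hi => ?_
        have := (Finset.mem_Ico.mp hi).1
        have e1 : ¬ i < chiS S := by omega
        have e2 : ¬ i = chiS S := by omega
        simp [greedyT, e1, e2]
      rw [h2, add_zero, ← Finset.range_eq_Ico, Finset.sum_range_succ]
      have h3 : ∑ i ∈ Finset.range (chiS S), greedyT S i
          = ∑ i ∈ Finset.range (chiS S), (3 : ℤ) ^ i :=
        Finset.sum_congr rfl fun i hi => by
          have := Finset.mem_range.mp hi; simp [greedyT, this]
      rw [h3]
      simp [greedyT]
    rw [h1, min_eq_left]
    calc S ≤ ∑ i ∈ Finset.range (chiS S + 1), (3 : ℤ) ^ i := le_of_lt (chiS_mem S hS0)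
      _ ≤ ∑ i ∈ Finset.range k, (3 : ℤ) ^ i :=
          Finset.sum_le_sum_of_subset_of_nonneg (Finset.range_subset_range.mpr hk)
            (fun i _ _ => by positivity)

lemma greedy_main_aux (n : ℕ) (hn1 : 1 ≤ n) (S : ℤ) (hS0 : 0 ≤ S)
    (hS1 : S ≤ ∑ i ∈ Finset.range n, (3 : ℤ) ^ i) :
    ((∀ i < n, 0 ≤ greedyT S i ∧ greedyT S i ≤ 3 ^ i) ∧
      ∑ i ∈ Finset.range n, greedyT S i = S) ∧
    (∀ t : ℕ → ℤ,
      (∀ i < n, 0 ≤ t i ∧ t i ≤ 3 ^ i) →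
      (∑ i ∈ Finset.range n, t i = S) →
      ∑ i ∈ Finset.range n, (t i : ℝ) / 3 ^ i ≤
        ∑ i ∈ Finset.range n, (greedyT S i : ℝ) / 3 ^ i) ∧
    ∑ i ∈ Finset.range n, (greedyT S i : ℝ) / 3 ^ i =
      (chiS S : ℝ) + ((S : ℝ) - ((3 : ℝ) ^ chiS S - 1) / 2) / 3 ^ chiS S := by
  have hmem := chiS_mem S hS0
  have hge := chiS_ge S hS0
  have hχn : chiS S ≤ n := by
    refine Nat.sInf_le ?_
    simp only [Set.mem_setOf_eq]
    have hpos : (0 : ℤ) < 3 ^ n := by positivity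
    calc S ≤ ∑ i ∈ Finset.range n, (3 : ℤ) ^ i := hS1
      _ < ∑ i ∈ Finset.range (n + 1), (3 : ℤ) ^ i := by
          rw [Finset.sum_range_succ]; omega
  have hcast : ∑ s ∈ Finset.range (chiS S), (3 : ℝ) ^ s = ((3 : ℝ) ^ chiS S - 1) / 2 := by
    rw [geom_sum_eq (by norm_num : (3 : ℝ) ≠ 1)]
    norm_num
  have hbounds : ∀ i < n, 0 ≤ greedyT S i ∧ greedyT S i ≤ 3 ^ i := by
    intro i _
    rcases lt_trichotomy i (chiS S) with h | h | h
    · have e : greedyT S i = 3 ^ i := by simp [greedyT, h]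
      rw [e]; exact ⟨by positivity, le_refl _⟩
    · have e : greedyT S i = S - ∑ s ∈ Finset.range (chiS S), 3 ^ s := by
        simp [greedyT, h]
      have h1 : S - ∑ s ∈ Finset.range (chiS S), (3 : ℤ) ^ s ≤ 3 ^ chiS S := by
        rw [Finset.sum_range_succ] at hmem; omega
      rw [e, h]
      exact ⟨by omega, h1⟩
    · have e1 : ¬ i < chiS S := by omega
      have e2 : ¬ i = chiS S := by omega
      have e : greedyT S i = 0 := by simp [greedyT, e1, e2]
      rw [e]; exact ⟨le_refl 0, by positivity⟩
  have hsum : ∑ i ∈ Finset.range n, greedyT S i = S := by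
    rw [greedy_partial S hS0 n, min_eq_left hS1]
  have hdom : ∀ t : ℕ → ℤ, (∀ i < n, 0 ≤ t i ∧ t i ≤ 3 ^ i) →
      (∑ i ∈ Finset.range n, t i = S) → ∀ k ≤ n,
      ∑ i ∈ Finset.range k, t i ≤ ∑ i ∈ Finset.range k, greedyT S i := by
    intro t ht htS k hk
    rw [greedy_partial S hS0 k, le_min_iff]
    constructor
    · have hsplit : S = ∑ i ∈ Finset.range k, t i + ∑ i ∈ Finset.Ico k n, t i := by
        rw [← htS, Finset.range_eq_Ico, ← Finset.sum_Ico_consecutive _ (Nat.zero_le k) hk,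
          ← Finset.range_eq_Ico]
      have hpos : 0 ≤ ∑ i ∈ Finset.Ico k n, t i :=
        Finset.sum_nonneg fun i hi => (ht i (Finset.mem_Ico.mp hi).2).1
      omega
    · exact Finset.sum_le_sum fun i hi =>
        (ht i (lt_of_lt_of_le (Finset.mem_range.mp hi) hk)).2
  refine ⟨⟨hbounds, hsum⟩, ?_, ?_⟩
  · intro t ht htS
    have key : ∀ k ≤ n, (∑ i ∈ Finset.range k, (t i : ℝ)) ≤
        ∑ i ∈ Finset.range k, (greedyT S i : ℝ) := by
      intro k hk
      have h := hdom t ht htS k hk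
      exact_mod_cast h
    have hf : ∀ (u : ℕ → ℤ), ∑ i ∈ Finset.range n, (u i : ℝ) / 3 ^ i =
        ∑ i ∈ Finset.range n, ((3 : ℝ) ^ i)⁻¹ • (u i : ℝ) := by
      intro u; refine Finset.sum_congr rfl fun i _ => ?_
      rw [smul_eq_mul, div_eq_inv_mul]
    rw [hf t, hf (greedyT S),
      Finset.sum_range_by_parts (fun i => ((3 : ℝ) ^ i)⁻¹) (fun i => (t i : ℝ)) n,
      Finset.sum_range_by_parts (fun i => ((3 : ℝ) ^ i)⁻¹) (fun i => (greedyT S i : ℝ)) n]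
    have hGn : (∑ i ∈ Finset.range n, (t i : ℝ)) = ∑ i ∈ Finset.range n, (greedyT S i : ℝ) := by
      have h : (∑ i ∈ Finset.range n, t i) = ∑ i ∈ Finset.range n, greedyT S i := by
        rw [htS, hsum]
      exact_mod_cast h
    rw [hGn]
    refine sub_le_sub_left (Finset.sum_le_sum fun i hi => ?_) _
    have hineg : ((3 : ℝ) ^ (i + 1))⁻¹ - ((3 : ℝ) ^ i)⁻¹ ≤ 0 := by
      have h : ((3 : ℝ) ^ (i + 1))⁻¹ ≤ ((3 : ℝ) ^ i)⁻¹ := by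
        apply inv_anti₀ (by positivity)
        apply pow_le_pow_right₀ (by norm_num) (by omega)
      linarith
    have hik : i + 1 ≤ n := by
      have := Finset.mem_range.mp hi; omega
    have h := key (i + 1) hik
    simpa [smul_eq_mul] using mul_le_mul_of_nonpos_left h hineg
  · have hone : ∀ i, i < chiS S → (greedyT S i : ℝ) / 3 ^ i = 1 := by
      intro i hi
      have e : greedyT S i = 3 ^ i := by simp [greedyT, hi]
      rw [e]
      push_cast
      exact div_self (by positivity)
    rcases lt_or_eq_of_le hχn with hlt | heq
    · rw [Finset.range_eq_Ico, ← Finset.sum_Ico_consecutive _ (Nat.zero_le (chiS S + 1)) hlt]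
      have h2 : ∑ i ∈ Finset.Ico (chiS S + 1) n, (greedyT S i : ℝ) / 3 ^ i = 0 := by
        refine Finset.sum_eq_zero fun i hi => ?_
        have := (Finset.mem_Ico.mp hi).1
        have e1 : ¬ i < chiS S := by omega
        have e2 : ¬ i = chiS S := by omega
        simp [greedyT, e1, e2]
      rw [h2, add_zero, ← Finset.range_eq_Ico, Finset.sum_range_succ]
      have h5 : ∑ i ∈ Finset.range (chiS S), (greedyT S i : ℝ) / 3 ^ i = chiS S := by
        rw [Finset.sum_congr rfl fun i hi => hone i (Finset.mem_range.mp hi)]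
        simp
      have h6 : (greedyT S (chiS S) : ℝ) = (S : ℝ) - ((3 : ℝ) ^ chiS S - 1) / 2 := by
        have e : greedyT S (chiS S) = S - ∑ s ∈ Finset.range (chiS S), 3 ^ s := by
          simp [greedyT]
        rw [e]
        push_cast
        rw [hcast]
      rw [h5, h6]
    · have hSfull : S = ∑ i ∈ Finset.range n, (3 : ℤ) ^ i := by
        rw [heq] at hge
        exact le_antisymm hS1 hge
      have h5 : ∑ i ∈ Finset.range n, (greedyT S i : ℝ) / 3 ^ i = n := by
        rw [Finset.sum_congr rfl fun i hi => hone i (heq ▸ Finset.mem_range.mp hi)]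
        simp
      have h6 : (S : ℝ) = ((3 : ℝ) ^ chiS S - 1) / 2 := by
        have h7 : S = ∑ i ∈ Finset.range (chiS S), (3 : ℤ) ^ i := by
          rw [heq]; exact hSfull
        rw [← hcast]
        exact_mod_cast h7
      rw [h5, h6, heq]
      simp

/-- Among all integer vectors `t = (t_0,…,t_{m-2})` with `0 ≤ t_i ≤ 3^i` and
`Σ t_i = S`, the quantity `Σ t_i·3^{-i}` is maximized by the greedy vector, and
the maximum value equals `χ + (S - (3^χ - 1)/2)·3^{-χ}`. -/
theorem greedy_maximizes (m : ℕ) (hm : 2 ≤ m) (S : ℤ) (hS0 : 0 ≤ S)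
    (hS1 : S ≤ ∑ i ∈ Finset.range (m - 1), (3 : ℤ) ^ i) :
    ((∀ i < m - 1, 0 ≤ greedyT S i ∧ greedyT S i ≤ 3 ^ i) ∧
      ∑ i ∈ Finset.range (m - 1), greedyT S i = S) ∧
    (∀ t : ℕ → ℤ,
      (∀ i < m - 1, 0 ≤ t i ∧ t i ≤ 3 ^ i) →
      (∑ i ∈ Finset.range (m - 1), t i = S) →
      ∑ i ∈ Finset.range (m - 1), (t i : ℝ) / 3 ^ i ≤
        ∑ i ∈ Finset.range (m - 1), (greedyT S i : ℝ) / 3 ^ i) ∧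
    ∑ i ∈ Finset.range (m - 1), (greedyT S i : ℝ) / 3 ^ i =
      (chiS S : ℝ) + ((S : ℝ) - ((3 : ℝ) ^ chiS S - 1) / 2) / 3 ^ chiS S := by
  exact greedy_main_aux (m - 1) (by omega) S hS0 hS1
end
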